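/- arXiv:1904.08181 — 5 statements merged into one kernel-verified Lean document; each statement's English description precedes it below -/
import Mathlib

section
/- Let m ≥ 4 be an integer and let i, j ∈ Fin m be indices with j ∉ {i-1, i, i+1} (indices modulo m). Let ε ∈ (ℤ/2)^m be the vector with ε_i = ε_j = 1 and all other coordinates 0. Then the sign-flip involution σ_ε has no fixed point in RZ_m: for every x ∈ RZ_m, σ_ε x ≠ x. -/
/-- The real moment-angle complex of the boundary of an `m`-gon:
the union over `i : Fin m` of the faces where coordinates `i, i+1` (indices mod `m`)
range in `[-1, 1]` and all other coordinates are `±1`. -/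
def RZ (m : ℕ) : Set (Fin m → ℝ) :=
  ⋃ i : Fin m,
    letI : NeZero m := ⟨i.pos.ne'⟩
    {x | (∀ j, -1 ≤ x j ∧ x j ≤ 1) ∧
      ∀ j, j ≠ i → j ≠ i + 1 → (x j = -1 ∨ x j = 1)}

/-- The coordinatewise sign-flip action of `(ℤ/2)^m` on `ℝ^m`. -/
def signFlip {m : ℕ} (ε : Fin m → ZMod 2) (x : Fin m → ℝ) : Fin m → ℝ :=
  fun j => (-1 : ℝ) ^ (ε j).val * x j

/-!
A fixed point of the flip in coordinates `i` and `j` has `x i = x j = 0`. A point of `RZ m`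
lies on some face `{k, k + 1}`, and only these two coordinates can avoid `±1`; so `i` and `j`
would both lie in `{k, k + 1}`, forcing `j ∈ {i - 1, i, i + 1}`.
-/

theorem eq_zero_of_signFlip_eq_self {m : ℕ} {ε : Fin m → ZMod 2} {x : Fin m → ℝ} {k : Fin m}
    (hk : ε k = 1) (hx : signFlip ε x = x) : x k = 0 := by
  have hxk := congrFun hx k
  simp only [signFlip, hk, ZMod.val_one, pow_one, neg_one_mul] at hxk
  linarith

theorem exists_face_of_mem_RZ {m : ℕ} [NeZero m] {x : Fin m → ℝ} (hx : x ∈ RZ m) :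
    ∃ k : Fin m, ∀ j, x j ≠ -1 → x j ≠ 1 → j = k ∨ j = k + 1 := by
  obtain ⟨k, -, hpm⟩ := Set.mem_iUnion.mp hx
  refine ⟨k, fun j hneg hpos => ?_⟩
  by_contra! hj
  exact (hpm j hj.1 hj.2).elim hneg hpos

theorem eq_sub_one_or_eq_or_eq_add_one_of_mem_pair {G : Type*} [AddGroup G] [One G]
    {a b k : G} (ha : a = k ∨ a = k + 1) (hb : b = k ∨ b = k + 1) :
    b = a - 1 ∨ b = a ∨ b = a + 1 := by
  rcases ha with rfl | rfl <;> rcases hb with rfl | rfl <;> simp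

theorem signFlip_two_coords_no_fixed_point_general (m : ℕ) [NeZero m]
    (i j : Fin m) (h₁ : j ≠ i - 1) (h₂ : j ≠ i) (h₃ : j ≠ i + 1)
    (ε : Fin m → ZMod 2) (hε : ε = fun k => if k = i ∨ k = j then 1 else 0) :
    ∀ x ∈ RZ m, signFlip ε x ≠ x := by
  intro x hx hfix
  have hxi : x i = 0 := eq_zero_of_signFlip_eq_self (by simp [hε]) hfix
  have hxj : x j = 0 := eq_zero_of_signFlip_eq_self (by simp [hε]) hfix
  obtain ⟨k, hface⟩ := exists_face_of_mem_RZ hx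
  have hi := hface i (by norm_num [hxi]) (by norm_num [hxi])
  have hj := hface j (by norm_num [hxj]) (by norm_num [hxj])
  rcases eq_sub_one_or_eq_or_eq_add_one_of_mem_pair hi hj with h | h | h
  exacts [h₁ h, h₂ h, h₃ h]

/-- If `m ≥ 4` and `j ∉ {i-1, i, i+1}` (indices mod `m`), then the sign flip in the
coordinates `i` and `j` has no fixed point in `RZ m`. -/
theorem signFlip_two_coords_no_fixed_point (m : ℕ) [NeZero m] (hm : 4 ≤ m)
    (i j : Fin m) (h₁ : j ≠ i - 1) (h₂ : j ≠ i) (h₃ : j ≠ i + 1)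
    (ε : Fin m → ZMod 2) (hε : ε = fun k => if k = i ∨ k = j then 1 else 0) :
    ∀ x ∈ RZ m, signFlip ε x ≠ x :=
  signFlip_two_coords_no_fixed_point_general m i j h₁ h₂ h₃ ε hε
end

section
/- Let m ≥ 3 be an integer and let ε ∈ (ℤ/2)^m be a nonzero vector whose support {j : ε_j = 1} is not contained in any set of the form {i, i+1} (indices modulo m). Then the sign-flip involution σ_ε has no fixed point in RZ_m: for every x ∈ RZ_m, σ_ε x ≠ x. -/
/-- If `ε ≠ 0` and the support of `ε` is not contained in any set `{i, i+1}`
(indices mod `m`), then the sign flip `σ_ε` has no fixed point in `RZ m`. -/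
theorem signFlip_no_fixed_point (m : ℕ) [NeZero m] (hm : 3 ≤ m)
    (ε : Fin m → ZMod 2) (hε : ε ≠ 0)
    (hsupp : ∀ i : Fin m, ¬ ({j | ε j = 1} ⊆ {i, i + 1})) :
    ∀ x ∈ RZ m, signFlip ε x ≠ x := by
  intro x hx hfix
  obtain ⟨s, ⟨i, rfl⟩, hxs⟩ := hx
  obtain ⟨_, hface⟩ := hxs
  obtain ⟨j, hj, hjni⟩ := Set.not_subset.mp (hsupp i)
  simp only [Set.mem_insert_iff, Set.mem_singleton_iff, not_or] at hjni
  have hxj : x j = -1 ∨ x j = 1 := hface j hjni.1 hjni.2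
  have := congrFun hfix j
  have hj' : ε j = 1 := hj
  simp only [signFlip, hj', ZMod.val_one, pow_one, neg_one_mul] at this
  have hx0 : x j = 0 := by linarith
  rcases hxj with h | h <;> rw [h] at hx0 <;> norm_num at hx0
end

section
/- For every integer m ≥ 3 there exists an (additive) subgroup G of (ℤ/2)^m of cardinality 2^{m-2} such that every nonzero element ε ∈ G has no fixed point in RZ_m, i.e., for every nonzero ε ∈ G and every x ∈ RZ_m one has σ_ε x ≠ x. (Consequently the restriction of the sign-flip action to G is a free action of a group isomorphic to (ℤ/2)^{m-2} on RZ_m.) -/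
/-- A proper 3-coloring of the cycle on `m` vertices with colors the nonzero
elements of `ZMod 2 × ZMod 2`. -/
def col (m : ℕ) (i : Fin m) : ZMod 2 × ZMod 2 :=
  if i.val = m - 1 then (1, 1) else if i.val % 2 = 0 then (0, 1) else (1, 0)

lemma col_ne_zero (m : ℕ) (i : Fin m) : col m i ≠ 0 := by
  unfold col; split_ifs <;> decide

lemma col_ne_succ (m : ℕ) (hm : 3 ≤ m) (i : Fin m) :
    haveI : NeZero m := ⟨by omega⟩
    col m i ≠ col m (i + 1) := by
  haveI : NeZero m := ⟨by omega⟩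
  have hi := i.isLt
  have h1m : 1 % m = 1 := Nat.mod_eq_of_lt (by omega)
  have hval : ((i + 1 : Fin m)).val = (i.val + 1) % m := by
    rw [Fin.val_add, Fin.val_one', h1m]
  rcases Nat.lt_or_ge i.val (m - 1) with h | h
  · have hv : ((i + 1 : Fin m)).val = i.val + 1 := by
      rw [hval]; exact Nat.mod_eq_of_lt (by omega)
    unfold col
    rw [hv]
    split_ifs <;> first | decide | omega
  · have hlast : i.val = m - 1 := by omega
    have hv : ((i + 1 : Fin m)).val = 0 := by
      rw [hval, show i.val + 1 = m by omega, Nat.mod_self]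
    unfold col
    rw [hv, hlast]
    split_ifs <;> first | decide | omega

/-- The homomorphism cutting out the subgroup. -/
def phi (m : ℕ) : (Fin m → ZMod 2) →+ (ZMod 2 × ZMod 2) where
  toFun ε := ∑ j, ε j • col m j
  map_zero' := by simp
  map_add' a b := by simp [add_smul, Finset.sum_add_distrib]

lemma phi_apply (m : ℕ) (ε : Fin m → ZMod 2) : phi m ε = ∑ j, ε j • col m j := rfl

lemma val_one_fin (m : ℕ) (hm : 3 ≤ m) :
    haveI : NeZero m := ⟨by omega⟩
    (1 : Fin m).val = 1 := by
  haveI : NeZero m := ⟨by omega⟩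
  rw [Fin.val_one']; exact Nat.mod_eq_of_lt (by omega)

lemma phi_surj (m : ℕ) (hm : 3 ≤ m) : Function.Surjective (phi m) := by
  haveI : NeZero m := ⟨by omega⟩
  have hv1 : (1 : Fin m).val = 1 := val_one_fin m hm
  have hv0 : (0 : Fin m).val = 0 := rfl
  rintro ⟨a, b⟩
  refine ⟨fun j => if j = 0 then b else if j = 1 then a else 0, ?_⟩
  have h01 : (0 : Fin m) ≠ 1 := by
    intro h; have := congrArg Fin.val h; rw [hv0, hv1] at this; omega
  rw [phi_apply, Fintype.sum_eq_add (0 : Fin m) 1 h01]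
  · have h0 : col m 0 = (0, 1) := by
      unfold col; rw [hv0, if_neg (by omega), if_pos (by decide)]
    have h1 : col m 1 = (1, 0) := by
      unfold col; rw [hv1, if_neg (by omega), if_neg (by decide)]
    rw [if_pos rfl, if_neg h01.symm, if_pos rfl, h0, h1]
    simp [Prod.ext_iff, smul_eq_mul]
  · rintro c ⟨hc0, hc1⟩
    simp [hc0, hc1]

/-- There is a subgroup of `(ℤ/2)^m` of cardinality `2^(m-2)` whose nonzero
elements act on `RZ m` without fixed points; i.e. `(ℤ/2)^(m-2)` acts freely on
`RZ m` by sign flips. -/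
theorem exists_free_subgroup (m : ℕ) (hm : 3 ≤ m) :
    ∃ G : AddSubgroup (Fin m → ZMod 2),
      Nat.card G = 2 ^ (m - 2) ∧
      ∀ ε ∈ G, ε ≠ 0 → ∀ x ∈ RZ m, signFlip ε x ≠ x := by
  haveI : NeZero m := ⟨by omega⟩
  refine ⟨(phi m).ker, ?_, ?_⟩
  · have htot : Nat.card (Fin m → ZMod 2) = 2 ^ m := by
      simp [Nat.card_pi]
    have hquot : Nat.card ((Fin m → ZMod 2) ⧸ (phi m).ker) = 4 := by
      rw [Nat.card_congr (QuotientAddGroup.quotientKerEquivOfSurjective (phi m)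
        (phi_surj m hm)).toEquiv]
      simp [Nat.card_eq_fintype_card]
    have hmul := AddSubgroup.card_eq_card_quotient_mul_card_addSubgroup (phi m).ker
    rw [htot, hquot] at hmul
    have hpow : (4 : ℕ) * 2 ^ (m - 2) = 2 ^ m := by
      rw [show (4 : ℕ) = 2 ^ 2 from rfl, ← pow_add]
      congr 1; omega
    exact (Nat.eq_of_mul_eq_mul_left (by norm_num) (hpow.trans hmul)).symm
  · intro ε hε hne x hx hfix
    rw [RZ, Set.mem_iUnion] at hx
    obtain ⟨i, hb, hpm⟩ := hx
    have hi1 : i ≠ i + 1 := by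
      intro h
      have h10 : (1 : Fin m) = 0 := by
        have := congrArg (· - i) h
        simpa [add_sub_cancel_left] using this.symm
      have := congrArg Fin.val h10
      rw [val_one_fin m hm] at this
      exact one_ne_zero this
    have h2 : ∀ a : ZMod 2, a = 0 ∨ a = 1 := by decide
    -- every coordinate outside {i, i+1} has ε j = 0
    have hsupp : ∀ j, j ≠ i → j ≠ i + 1 → ε j = 0 := by
      intro j hj1 hj2
      rcases h2 (ε j) with h | h
      · exact h
      · exfalso
        have hj := congrFun hfix j
        rw [signFlip, h] at hj
        have hx0 : x j = 0 := by
          have : (-1 : ℝ) ^ (1 : ZMod 2).val * x j = - x j := by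
            rw [show ((1 : ZMod 2)).val = 1 from rfl]; ring
          rw [this] at hj; linarith
        rcases hpm j hj1 hj2 with h' | h' <;> rw [hx0] at h' <;> norm_num at h'
    have hker : phi m ε = 0 := hε
    rw [phi_apply, Fintype.sum_eq_add i (i + 1) hi1
      (fun c hc => by rw [hsupp c hc.1 hc.2, zero_smul])] at hker
    have hcc := col_ne_succ m hm i
    rcases h2 (ε i) with hi0 | hi0 <;> rcases h2 (ε (i + 1)) with hi10 | hi10
    · apply hne
      funext j
      by_cases hj1 : j = i
      · rw [hj1]; exact hi0
      · by_cases hj2 : j = i + 1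
        · rw [hj2]; exact hi10
        · exact hsupp j hj1 hj2
    · rw [hi0, hi10, zero_smul, one_smul, zero_add] at hker
      exact col_ne_zero m (i + 1) hker
    · rw [hi0, hi10, zero_smul, one_smul, add_zero] at hker
      exact col_ne_zero m i hker
    · rw [hi0, hi10, one_smul, one_smul] at hker
      have hneg : ∀ v : ZMod 2 × ZMod 2, -v = v := by decide
      exact hcc (by rw [eq_neg_of_add_eq_zero_left hker, hneg])
end

section
/- For every integer m ≥ 3, the set RZ_m, equipped with the subspace topology from ℝ^m, is a topological 2-manifold: every point of RZ_m has an open neighborhood (in RZ_m) that is homeomorphic to an open subset of ℝ². -/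
open Real ComplexConjugate Topology
open Complex (I)

lemma cos_lt_cos_of_lt_of_lt_two_pi_sub {a θ : ℝ} (ha : 0 ≤ a) (h1 : a < θ)
    (h2 : θ < 2 * π - a) : cos θ < cos a := by
  rcases le_total θ π with hθ | hθ
  · exact cos_lt_cos_of_nonneg_of_le_pi ha hθ h1
  · rw [← cos_two_pi_sub θ]
    exact cos_lt_cos_of_nonneg_of_le_pi ha (by linarith) (by linarith)

lemma cos_add_cos_sub_lt {m k : ℕ} (hk : 2 ≤ k) (hkm : k < m) :
    cos (2 * π * k / m) + cos (2 * π * k / m - 2 * π / m) < 1 + cos (2 * π / m) := by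
  have hm' : (3 : ℝ) ≤ m := by exact_mod_cast (show 3 ≤ m by omega)
  have hk' : (2 : ℝ) ≤ k := by exact_mod_cast hk
  have hkm' : (k : ℝ) + 1 ≤ m := by exact_mod_cast hkm
  have hpos : 0 < cos (π / m) := cos_pos_of_mem_Ioo
    ⟨by linarith [pi_pos, show 0 < π / m by positivity],
      by rw [div_lt_iff₀ (by positivity)]; nlinarith [pi_pos]⟩
  have hlt : cos ((2 * k - 1) * π / m) < cos (π / m) := by
    apply cos_lt_cos_of_lt_of_lt_two_pi_sub (by positivity)
    · rw [div_lt_div_iff_of_pos_right (by positivity)]; nlinarith [pi_pos]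
    · rw [show 2 * π - π / m = (2 * m - 1) * π / m by field_simp,
        div_lt_div_iff_of_pos_right (by positivity)]
      nlinarith [pi_pos]
  have hsum : cos (2 * π * k / m) + cos (2 * π * k / m - 2 * π / m) =
      2 * cos ((2 * k - 1) * π / m) * cos (π / m) := by
    rw [cos_add_cos,
      show (2 * π * k / m + (2 * π * k / m - 2 * π / m)) / 2 = (2 * k - 1) * π / m by ring,
      show (2 * π * k / m - (2 * π * k / m - 2 * π / m)) / 2 = π / m by ring]
  have hdouble : 1 + cos (2 * π / m) = 2 * cos (π / m) * cos (π / m) := by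
    rw [show 2 * π / m = 2 * (π / m) by ring, cos_two_mul]; ring
  rw [hsum, hdouble]
  nlinarith

lemma abs_mul_abs_sin_le_norm (a b φ : ℝ) :
    |b| * |sin φ| ≤ ‖(a : ℂ) + b * Complex.exp (φ * I)‖ := by
  calc |b| * |sin φ| = |((a : ℂ) + b * Complex.exp (φ * I)).im| := by
        rw [Complex.add_im, Complex.ofReal_im, Complex.im_ofReal_mul, Complex.exp_ofReal_mul_I_im,
          zero_add, abs_mul]
    _ ≤ _ := Complex.abs_im_le_norm _

lemma sin_mul_exp_mul_I (α φ : ℝ) :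
    sin α * Complex.exp (φ * I) = sin (α - φ) + sin φ * Complex.exp (α * I) := by
  apply Complex.ext <;>
    simp [Complex.exp_ofReal_mul_I_re, Complex.exp_ofReal_mul_I_im, sin_sub,
      Complex.sin_ofReal_re, Complex.cos_ofReal_re] <;> ring

variable {m : ℕ}

noncomputable def fanRay (m : ℕ) (j : Fin m) : ℂ := Complex.exp (↑(2 * π * j / m) * I)

lemma fanRay_ofNat [NeZero m] (n : ℕ) :
    fanRay m (Fin.ofNat m n) = Complex.exp (↑(2 * π * n / m) * I) := by
  have hζ : Complex.exp (2 * π * I / m) ^ m = 1 :=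
    (Complex.isPrimitiveRoot_exp m (NeZero.ne m)).pow_eq_one
  have hpow (k : ℕ) : Complex.exp (↑(2 * π * k / m) * I) =
      Complex.exp (2 * π * I / m) ^ k := by
    rw [← Complex.exp_nat_mul]; push_cast; ring_nf
  rw [fanRay, Fin.val_ofNat, hpow, hpow, ← pow_eq_pow_mod _ hζ]

lemma fanRay_add [NeZero m] (a b : Fin m) : fanRay m (a + b) = fanRay m a * fanRay m b := by
  have hab : a + b = Fin.ofNat m (a + b) := by ext; simp [Fin.val_add]
  rw [hab, fanRay_ofNat, fanRay, fanRay, ← Complex.exp_add]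
  push_cast; ring_nf

lemma fanRay_succ [NeZero m] (i : Fin m) :
    fanRay m (i + 1) = fanRay m i * Complex.exp (↑(2 * π / m) * I) := by
  rw [fanRay_add, show (1 : Fin m) = Fin.ofNat m 1 from rfl, fanRay_ofNat, Nat.cast_one,
    mul_one]

lemma norm_fanRay (j : Fin m) : ‖fanRay m j‖ = 1 := Complex.norm_exp_ofReal_mul_I _

lemma fanRay_mul_conj [NeZero m] (j q : Fin m) :
    fanRay m j * conj (fanRay m q) = fanRay m (j - q) := by
  conv_lhs => rw [← sub_add_cancel j q, fanRay_add]
  rw [mul_assoc, Complex.mul_conj, Complex.normSq_eq_norm_sq, norm_fanRay]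
  simp

noncomputable def fanWeight [NeZero m] (q j : Fin m) : ℝ :=
  (fanRay m j * conj (fanRay m q + fanRay m (q + 1))).re

lemma fanWeight_eq [NeZero m] (q j : Fin m) :
    fanWeight q j = cos (2 * π * (j - q : Fin m) / m) +
      cos (2 * π * (j - q : Fin m) / m - 2 * π / m) := by
  rw [fanWeight, fanRay_succ, map_add, map_mul, mul_add, ← mul_assoc, fanRay_mul_conj, fanRay,
    ← Complex.exp_conj, ← Complex.exp_add, Complex.add_re, Complex.exp_ofReal_mul_I_re]
  congr 1
  convert Complex.exp_ofReal_mul_I_re _ using 3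
  simp only [map_mul, Complex.conj_ofReal, Complex.conj_I]
  push_cast; ring

lemma fanWeight_self [NeZero m] (q : Fin m) : fanWeight q q = 1 + cos (2 * π / m) := by
  simp [fanWeight_eq]

lemma fanWeight_succ (hm : 2 ≤ m) [NeZero m] (q : Fin m) :
    fanWeight q (q + 1) = 1 + cos (2 * π / m) := by
  rw [fanWeight_eq, add_sub_cancel_left, Fin.val_one', Nat.mod_eq_of_lt hm]
  simp [add_comm]

lemma fanWeight_lt (hm : 3 ≤ m) [NeZero m] {q j : Fin m} (h₀ : j ≠ q) (h₁ : j ≠ q + 1) :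
    fanWeight q j < 1 + cos (2 * π / m) := by
  have hk₀ : ((j - q : Fin m) : ℕ) ≠ 0 := by
    rwa [Ne, Fin.val_eq_zero_iff, sub_eq_zero]
  have hk₁ : ((j - q : Fin m) : ℕ) ≠ 1 := by
    rwa [Ne, ← Nat.mod_eq_of_lt (show 1 < m by omega), ← Fin.val_one', Fin.val_inj,
      sub_eq_iff_eq_add']
  rw [fanWeight_eq]
  exact cos_add_cos_sub_lt (by omega) (Fin.isLt _)

lemma Fin.self_ne_add_one (hm : 2 ≤ m) [NeZero m] (i : Fin m) : i ≠ i + 1 := by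
  intro h
  have h1 : (1 : Fin m) = 0 := by simpa using congrArg (· - i) h.symm
  rw [Fin.ext_iff, Fin.val_one', Fin.val_zero, Nat.mod_eq_of_lt hm] at h1
  exact one_ne_zero h1

lemma sin_two_pi_div_pos (hm : 3 ≤ m) : 0 < sin (2 * π / m) := by
  have hm' : (3 : ℝ) ≤ m := by exact_mod_cast hm
  apply sin_pos_of_pos_of_lt_pi (by positivity)
  rw [div_lt_iff₀ (by positivity)]
  nlinarith [pi_pos]

lemma abs_mul_sin_le_norm (hm : 3 ≤ m) [NeZero m] (a b : ℝ) (i : Fin m) :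
    |a| * sin (2 * π / m) ≤ ‖a * fanRay m i + b * fanRay m (i + 1)‖ ∧
      |b| * sin (2 * π / m) ≤ ‖a * fanRay m i + b * fanRay m (i + 1)‖ := by
  set α := 2 * π / m
  have hsin : sin α = |sin α| := (abs_of_pos (sin_two_pi_div_pos hm)).symm
  have hrot : (a : ℂ) * fanRay m i + b * fanRay m (i + 1) =
      fanRay m i * (a + b * Complex.exp (α * I)) := by
    rw [fanRay_succ]; ring
  have hrot' : (a : ℂ) + b * Complex.exp (α * I) =
      Complex.exp (α * I) * (b + a * Complex.exp (↑(-α) * I)) := by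
    rw [mul_add, mul_left_comm, ← Complex.exp_add]
    push_cast; ring_nf; simp
  rw [hrot, norm_mul, norm_fanRay, one_mul]
  constructor
  · rw [hrot', norm_mul, Complex.norm_exp_ofReal_mul_I, one_mul, hsin, ← abs_neg (sin α),
      ← sin_neg]
    exact abs_mul_abs_sin_le_norm _ _ _
  · rw [hsin]
    exact abs_mul_abs_sin_le_norm _ _ _

lemma eq_of_mul_fanRay_add_eq (hm : 3 ≤ m) [NeZero m] {a b a' b' : ℝ} {i : Fin m}
    (h : a * fanRay m i + b * fanRay m (i + 1) = a' * fanRay m i + b' * fanRay m (i + 1)) :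
    a = a' ∧ b = b' := by
  have h0 :
      ((a - a' : ℝ) : ℂ) * fanRay m i + ((b - b' : ℝ) : ℂ) * fanRay m (i + 1) = 0 := by
    push_cast; linear_combination h
  have hsin := sin_two_pi_div_pos hm
  obtain ⟨ha, hb⟩ := abs_mul_sin_le_norm hm (a - a') (b - b') i
  rw [h0, norm_zero] at ha hb
  have eq_of_abs_mul {c : ℝ} (hc : |c| * sin (2 * π / m) ≤ 0) : c = 0 :=
    abs_eq_zero.1 (le_antisymm (le_of_mul_le_mul_right (by rwa [zero_mul]) hsin) (abs_nonneg c))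
  exact ⟨sub_eq_zero.1 (eq_of_abs_mul ha), sub_eq_zero.1 (eq_of_abs_mul hb)⟩

noncomputable def fanMap (t : Fin m → ℝ) : ℂ := ∑ j, (t j : ℂ) * fanRay m j

def fanCone (m : ℕ) [NeZero m] : Set (Fin m → ℝ) :=
  {t | 0 ≤ t ∧ ∃ i, Function.support t ⊆ {i, i + 1}}

lemma fanMap_eq_of_support_subset (hm : 2 ≤ m) [NeZero m] {t : Fin m → ℝ} {i : Fin m}
    (h : Function.support t ⊆ {i, i + 1}) :
    fanMap t = t i * fanRay m i + t (i + 1) * fanRay m (i + 1) :=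
  Fintype.sum_eq_add _ _ (Fin.self_ne_add_one hm i) fun j hj => by
    rw [Function.support_subset_iff'.mp h j (by simp [hj.1, hj.2]), Complex.ofReal_zero, zero_mul]

lemma re_fanMap_mul_conj [NeZero m] (t : Fin m → ℝ) (q : Fin m) :
    (fanMap t * conj (fanRay m q + fanRay m (q + 1))).re = ∑ j, t j * fanWeight q j := by
  simp only [fanMap, Finset.sum_mul, Complex.re_sum, mul_assoc, Complex.re_ofReal_mul, fanWeight]

lemma fanWeight_le (hm : 3 ≤ m) [NeZero m] (q j : Fin m) :
    fanWeight q j ≤ 1 + cos (2 * π / m) := by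
  by_cases h₀ : j = q
  · rw [h₀, fanWeight_self]
  by_cases h₁ : j = q + 1
  · rw [h₁, fanWeight_succ (by omega)]
  exact (fanWeight_lt hm h₀ h₁).le

lemma sum_mul_fanWeight_le (hm : 3 ≤ m) [NeZero m] {t : Fin m → ℝ} (ht : 0 ≤ t)
    (q : Fin m) :
    ∑ j, t j * fanWeight q j ≤ (1 + cos (2 * π / m)) * ∑ j, t j := by
  rw [Finset.mul_sum]
  exact Finset.sum_le_sum fun j _ => by
    rw [mul_comm _ (t j)]; exact mul_le_mul_of_nonneg_left (fanWeight_le hm q j) (ht j)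

lemma sum_mul_fanWeight_eq_iff (hm : 3 ≤ m) [NeZero m] {t : Fin m → ℝ} (ht : 0 ≤ t)
    (q : Fin m) :
    ∑ j, t j * fanWeight q j = (1 + cos (2 * π / m)) * ∑ j, t j ↔
      Function.support t ⊆ {q, q + 1} := by
  have hgap : (1 + cos (2 * π / m)) * ∑ j, t j - ∑ j, t j * fanWeight q j =
      ∑ j, t j * (1 + cos (2 * π / m) - fanWeight q j) := by
    rw [Finset.mul_sum, ← Finset.sum_sub_distrib]
    exact Finset.sum_congr rfl fun j _ => by ring
  rw [eq_comm, ← sub_eq_zero, hgap, Finset.sum_eq_zero_iff_of_nonneg fun j _ =>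
    mul_nonneg (ht j) (sub_nonneg.2 (fanWeight_le hm q j)), Function.support_subset_iff']
  constructor
  · intro h j hj
    simp only [Set.mem_insert_iff, Set.mem_singleton_iff, not_or] at hj
    refine (mul_eq_zero.1 (h j (Finset.mem_univ j))).resolve_right ?_
    linarith [fanWeight_lt hm hj.1 hj.2]
  · intro h j _
    by_cases hj : j ∈ ({q, q + 1} : Set (Fin m))
    · rcases hj with rfl | rfl
      · rw [fanWeight_self, sub_self, mul_zero]
      · rw [fanWeight_succ (by omega), sub_self, mul_zero]
    · rw [h j hj, zero_mul]

lemma injOn_fanMap (hm : 3 ≤ m) [NeZero m] : Set.InjOn fanMap (fanCone m) := by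
  rintro t ⟨ht, i, hti⟩ t' ⟨ht', i', hti'⟩ heq
  have hpair (q : Fin m) : ∑ j, t j * fanWeight q j = ∑ j, t' j * fanWeight q j := by
    rw [← re_fanMap_mul_conj, ← re_fanMap_mul_conj, heq]
  -- Each side attains the bound of `sum_mul_fanWeight_le` on its own edge, so both carry the
  -- same total mass and `t'` attains it on the edge of `t` as well.
  have hti'' : Function.support t' ⊆ {i, i + 1} := by
    refine (sum_mul_fanWeight_eq_iff hm ht' i).1 ?_
    linarith [(sum_mul_fanWeight_eq_iff hm ht i).2 hti,
      (sum_mul_fanWeight_eq_iff hm ht' i').2 hti', sum_mul_fanWeight_le hm ht' i,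
      sum_mul_fanWeight_le hm ht i', hpair i, hpair i']
  rw [fanMap_eq_of_support_subset (by omega) hti,
    fanMap_eq_of_support_subset (by omega) hti''] at heq
  obtain ⟨h₀, h₁⟩ := eq_of_mul_fanRay_add_eq hm heq
  funext j
  by_cases hj : j ∈ ({i, i + 1} : Set (Fin m))
  · rcases hj with rfl | rfl
    exacts [h₀, h₁]
  · rw [Function.support_subset_iff'.1 hti j hj, Function.support_subset_iff'.1 hti'' j hj]

lemma mul_fanRay_add_mem_image_fanCone (hm : 2 ≤ m) [NeZero m] {a b : ℝ} (ha : 0 ≤ a)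
    (hb : 0 ≤ b) (i : Fin m) :
    a * fanRay m i + b * fanRay m (i + 1) ∈ fanMap '' fanCone m := by
  have hi := Fin.self_ne_add_one hm i
  set t : Fin m → ℝ := fun j => if j = i then a else if j = i + 1 then b else 0
  have hsupp : Function.support t ⊆ {i, i + 1} := Function.support_subset_iff'.2 fun j hj => by
    simp only [Set.mem_insert_iff, Set.mem_singleton_iff, not_or] at hj
    simp [t, hj.1, hj.2]
  refine ⟨t, ⟨fun j => ?_, i, hsupp⟩, ?_⟩
  · simp only [t, Pi.zero_apply]
    split_ifs
    exacts [ha, hb, le_rfl]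
  · rw [fanMap_eq_of_support_subset hm hsupp]
    simp [t, hi.symm]

lemma surjOn_fanMap (hm : 3 ≤ m) [NeZero m] : Set.SurjOn fanMap (fanCone m) Set.univ := by
  intro z _
  set α := 2 * π / m with hα
  have hα₀ : 0 < α := by positivity
  have hαπ : α ≤ π := by
    rw [hα, div_le_iff₀ (by positivity)]
    nlinarith [pi_pos, show (3 : ℝ) ≤ m by exact_mod_cast hm]
  have hsin : 0 < sin α := sin_two_pi_div_pos hm
  set θ := Complex.arg z + 2 * π
  have hθ : 0 ≤ θ := by linarith [Complex.neg_pi_lt_arg z, pi_pos]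
  have hz : z = ‖z‖ * Complex.exp (θ * I) := by
    rw [Complex.ofReal_add, add_mul, Complex.exp_add, Complex.ofReal_mul, Complex.ofReal_ofNat,
      Complex.exp_two_pi_mul_I, mul_one, Complex.norm_mul_exp_arg_mul_I]
  set n := ⌊θ / α⌋₊
  set φ := θ - n * α
  have hφ₀ : 0 ≤ φ := by
    have := Nat.floor_le (div_nonneg hθ hα₀.le)
    rw [le_div_iff₀ hα₀] at this; linarith
  have hφα : φ < α := by
    have := Nat.lt_floor_add_one (θ / α)
    rw [div_lt_iff₀ hα₀] at this; linarith
  set i := Fin.ofNat m n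
  have hexp : Complex.exp (θ * I) = fanRay m i * Complex.exp (φ * I) := by
    rw [fanRay_ofNat, ← Complex.exp_add]; congr 1; simp only [φ, α]; push_cast; ring
  obtain ⟨t, ht, hft⟩ := mul_fanRay_add_mem_image_fanCone (i := i)
    (a := ‖z‖ * sin (α - φ) / sin α) (b := ‖z‖ * sin φ / sin α) (by omega)
    (div_nonneg (mul_nonneg (norm_nonneg z) (sin_nonneg_of_nonneg_of_le_pi (by linarith)
      (by linarith))) hsin.le)
    (div_nonneg (mul_nonneg (norm_nonneg z) (sin_nonneg_of_nonneg_of_le_pi hφ₀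
      (by linarith))) hsin.le)
  refine ⟨t, ht, ?_⟩
  have hsin' : (sin α : ℂ) ≠ 0 := by exact_mod_cast hsin.ne'
  have hφ : Complex.exp (φ * I) =
      (sin (α - φ) + sin φ * Complex.exp (α * I)) / sin α := by
    rw [eq_div_iff hsin', mul_comm]
    exact sin_mul_exp_mul_I α φ
  rw [hft, fanRay_succ, ← hα]
  conv_rhs => rw [hz, hexp, hφ]
  simp only [Complex.ofReal_div, Complex.ofReal_mul]
  ring

lemma mul_sin_le_norm_fanMap (hm : 3 ≤ m) [NeZero m] {t : Fin m → ℝ} (ht : t ∈ fanCone m)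
    (j : Fin m) : t j * sin (2 * π / m) ≤ ‖fanMap t‖ := by
  obtain ⟨ht, i, hti⟩ := ht
  obtain ⟨hi, hi'⟩ := abs_mul_sin_le_norm hm (t i) (t (i + 1)) i
  rw [fanMap_eq_of_support_subset (by omega) hti]
  by_cases hj : j ∈ ({i, i + 1} : Set (Fin m))
  · rcases hj with rfl | rfl
    · rwa [abs_of_nonneg (ht j)] at hi
    · rwa [abs_of_nonneg (ht _)] at hi'
  · rw [Function.support_subset_iff'.1 hti j hj, zero_mul]
    exact norm_nonneg _

noncomputable def cayley (p : ℝ) : ℝ := (1 - p) / (1 + p)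

lemma cayley_cayley {p : ℝ} (hp : p ≠ -1) : cayley (cayley p) = p := by
  have : 1 + p ≠ 0 := fun h => hp (by linarith)
  unfold cayley
  field_simp
  ring

lemma cayley_nonneg {p : ℝ} (h₁ : -1 < p) (h₂ : p ≤ 1) : 0 ≤ cayley p :=
  div_nonneg (by linarith) (by linarith)

lemma neg_one_lt_cayley {u : ℝ} (hu : 0 ≤ u) : -1 < cayley u := by
  rw [cayley, lt_div_iff₀ (by linarith)]; linarith

lemma cayley_le_one {u : ℝ} (hu : 0 ≤ u) : cayley u ≤ 1 := by
  rw [cayley, div_le_iff₀ (by linarith)]; linarith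

lemma cayley_lt_of_cayley_lt {p a : ℝ} (hp : -1 < p) (ha : 0 ≤ a) (h : cayley p < a) :
    cayley a < p := by
  rw [cayley, div_lt_iff₀ (by linarith)] at h ⊢
  linarith

section Face

variable [NeZero m]

def face (i : Fin m) : Set (Fin m → ℝ) :=
  {x | (∀ j, -1 ≤ x j ∧ x j ≤ 1) ∧
    ∀ j, j ≠ i → j ≠ i + 1 → (x j = -1 ∨ x j = 1)}

lemma RZ_eq_iUnion_face : RZ m = ⋃ i, face i := rfl

lemma isClosed_face (i : Fin m) : IsClosed (face i) := by
  simp only [face, Set.ofPred_and, Set.ofPred_forall, Set.ofPred_or]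
  exact (isClosed_iInter fun j => (isClosed_le continuous_const (continuous_apply j)).inter
    (isClosed_le (continuous_apply j) continuous_const)).inter
    (isClosed_iInter fun j => isClosed_iInter fun _ => isClosed_iInter fun _ =>
      (isClosed_eq (continuous_apply j) continuous_const).union
        (isClosed_eq (continuous_apply j) continuous_const))

lemma isCompact_RZ : IsCompact (RZ m) := by
  refine isCompact_Icc.of_isClosed_subset (s := Set.Icc (-1) 1) ?_ ?_
  · rw [RZ_eq_iUnion_face]
    exact isClosed_iUnion_of_finite isClosed_face
  · rw [RZ_eq_iUnion_face]
    rintro y ⟨_, ⟨i, rfl⟩, hy⟩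
    exact ⟨fun j => (hy.1 j).1, fun j => (hy.1 j).2⟩

end Face

section Star

variable {v : Fin m → ℝ}

def openStar (v : Fin m → ℝ) : Set (Fin m → ℝ) := {y | ∀ j, -1 < v j * y j}

noncomputable def fanCoord (v y : Fin m → ℝ) (j : Fin m) : ℝ := cayley (v j * y j)

noncomputable def starChart (v y : Fin m → ℝ) : ℂ := fanMap (fanCoord v y)

lemma isOpen_openStar (v : Fin m → ℝ) : IsOpen (openStar v) := by
  simp only [openStar, Set.ofPred_forall]
  exact isOpen_iInter_of_finite fun j =>
    isOpen_lt continuous_const (continuous_const.mul (continuous_apply j))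

lemma continuousOn_starChart (v : Fin m → ℝ) : ContinuousOn (starChart v) (openStar v) := by
  have hfan : Continuous (fanMap (m := m)) := continuous_finsetSum _ fun j _ =>
    (Complex.continuous_ofReal.comp (continuous_apply j)).mul continuous_const
  refine hfan.comp_continuousOn (continuousOn_pi.2 fun j => ?_)
  simp only [fanCoord, cayley]
  exact ContinuousOn.div (by fun_prop) (by fun_prop) fun y hy => by linarith [hy j]

lemma mul_eq_one_of_mem_face [NeZero m] (hv : ∀ j, v j = -1 ∨ v j = 1) {y : Fin m → ℝ}
    {i j : Fin m} (hy : y ∈ face i) (hyv : y ∈ openStar v) (hj : j ≠ i) (hj' : j ≠ i + 1) :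
    v j * y j = 1 := by
  have hvy : v j * y j = 1 ∨ v j * y j = -1 := by
    rcases hv j with h | h <;> rcases hy.2 j hj hj' with h' | h' <;> simp [h, h']
  exact hvy.resolve_right (hyv j).ne'

lemma fanCoord_mem_fanCone [NeZero m] (hv : ∀ j, v j = -1 ∨ v j = 1) {y : Fin m → ℝ}
    (hy : y ∈ RZ m) (hyv : y ∈ openStar v) : fanCoord v y ∈ fanCone m := by
  obtain ⟨i, hi⟩ := Set.mem_iUnion.1 hy
  refine ⟨fun j => cayley_nonneg (hyv j) ?_, i, Function.support_subset_iff'.2 fun j hj => ?_⟩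
  · rcases hv j with h | h <;> rw [h] <;> linarith [hi.1 j]
  · simp only [Set.mem_insert_iff, Set.mem_singleton_iff, not_or] at hj
    rw [fanCoord, mul_eq_one_of_mem_face hv hi hyv hj.1 hj.2, cayley, sub_self, zero_div]

lemma injOn_fanCoord (hv : ∀ j, v j = -1 ∨ v j = 1) : Set.InjOn (fanCoord v) (openStar v) := by
  intro y hy y' hy' h
  funext j
  have hj := congrArg cayley (congrFun h j)
  rw [fanCoord, fanCoord, cayley_cayley (hy j).ne', cayley_cayley (hy' j).ne'] at hj
  exact mul_left_cancel₀ (by rcases hv j with h | h <;> rw [h] <;> norm_num) hj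

lemma exists_fanCoord_eq [NeZero m] (hv : ∀ j, v j = -1 ∨ v j = 1) {t : Fin m → ℝ}
    (ht : t ∈ fanCone m) : ∃ y ∈ RZ m ∩ openStar v, fanCoord v y = t := by
  obtain ⟨ht₀, i, hti⟩ := ht
  set y : Fin m → ℝ := fun j => v j * cayley (t j)
  have hvy (j : Fin m) : v j * y j = cayley (t j) := by
    rcases hv j with h | h <;> simp [y, h]
  refine ⟨y, ⟨Set.mem_iUnion.2 ⟨i, fun j => ?_, fun j hj hj' => ?_⟩, fun j => ?_⟩,
    funext fun j => ?_⟩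
  · have := neg_one_lt_cayley (ht₀ j)
    have := cayley_le_one (ht₀ j)
    rcases hv j with h | h <;> simp only [y, h] <;> constructor <;> linarith
  · have htj : t j = 0 := Function.support_subset_iff'.1 hti j (by simp [hj, hj'])
    rw [show y j = v j by simp [y, htj, cayley]]
    exact hv j
  · rw [hvy]
    exact neg_one_lt_cayley (ht₀ j)
  · have htj : -1 < t j := by linarith [show (0 : ℝ) ≤ t j from ht₀ j]
    rw [fanCoord, hvy, cayley_cayley htj.ne']

lemma cayley_lt_mul_of_norm_starChart_lt (hm : 3 ≤ m) [NeZero m]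
    (hv : ∀ j, v j = -1 ∨ v j = 1) {y : Fin m → ℝ} (hy : y ∈ RZ m)
    (hyv : y ∈ openStar v) {R : ℝ} (hR : ‖starChart v y‖ < R)
    (j : Fin m) : cayley (R / sin (2 * π / m)) < v j * y j := by
  have hsin := sin_two_pi_div_pos hm
  refine cayley_lt_of_cayley_lt (hyv j) (div_nonneg ((norm_nonneg _).trans hR.le) hsin.le) ?_
  rw [lt_div_iff₀ hsin]
  exact (mul_sin_le_norm_fanMap hm (fanCoord_mem_fanCone hv hy hyv) j).trans_lt hR

lemma starChart_image (hm : 3 ≤ m) [NeZero m] (hv : ∀ j, v j = -1 ∨ v j = 1) (R : ℝ) :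
    starChart v '' (RZ m ∩ (openStar v ∩ starChart v ⁻¹' Metric.ball 0 R)) =
      Metric.ball 0 R := by
  ext z
  constructor
  · rintro ⟨y, ⟨_, _, hy⟩, rfl⟩
    exact hy
  · intro hz
    obtain ⟨t, ht, rfl⟩ := surjOn_fanMap hm (Set.mem_univ z)
    obtain ⟨y, ⟨hy, hyv⟩, rfl⟩ := exists_fanCoord_eq hv ht
    exact ⟨y, ⟨hy, hyv, hz⟩, rfl⟩

end Star

lemma nonempty_homeomorph_image_of_injOn {X Y : Type*} [TopologicalSpace X] [TopologicalSpace Y]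
    [T2Space Y] {S K W : Set X} {f : X → Y} (hK : IsCompact K) (hf : ContinuousOn f K)
    (hinj : Set.InjOn f K) (hSWK : S ∩ W ⊆ K) :
    Nonempty ((Subtype.val ⁻¹' W : Set S) ≃ₜ f '' (S ∩ W)) := by
  have : CompactSpace K := isCompact_iff_compactSpace.mp hK
  have hfK : IsEmbedding (K.domRestrict f) :=
    (hf.domRestrict.isClosedEmbedding hinj.injective).isEmbedding
  have hmem (u : (Subtype.val ⁻¹' W : Set S)) : u.1.1 ∈ K := hSWK ⟨u.1.2, u.2⟩
  have hι :
      IsEmbedding (Set.codRestrict (fun u : (Subtype.val ⁻¹' W : Set S) => u.1.1) K hmem) :=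
    (IsEmbedding.subtypeVal.comp IsEmbedding.subtypeVal).codRestrict K hmem
  have hrange : Set.range (K.domRestrict f ∘ Set.codRestrict _ K hmem) = f '' (S ∩ W) := by
    ext z
    constructor
    · rintro ⟨u, rfl⟩
      exact ⟨u.1.1, ⟨u.1.2, u.2⟩, rfl⟩
    · rintro ⟨y, ⟨hyS, hyW⟩, rfl⟩
      exact ⟨⟨⟨y, hyS⟩, hyW⟩, rfl⟩
  exact ⟨(hfK.comp hι).toHomeomorph.trans (Homeomorph.setCongr hrange)⟩

lemma exists_isOpen_homeomorph_complex (hm : 3 ≤ m) [NeZero m] {x : Fin m → ℝ}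
    (hx : x ∈ RZ m) :
    ∃ (U : Set (RZ m)) (V : Set ℂ), IsOpen U ∧ IsOpen V ∧ (⟨x, hx⟩ : RZ m) ∈ U ∧
      Nonempty (U ≃ₜ V) := by
  set v : Fin m → ℝ := fun j => if 0 ≤ x j then 1 else -1
  have hv (j : Fin m) : v j = -1 ∨ v j = 1 := by
    simp only [v]; split_ifs <;> simp
  have hxv : x ∈ openStar v := fun j => by
    simp only [v]; split_ifs with h <;> linarith
  set R := ‖starChart v x‖ + 1
  set A := R / sin (2 * π / m)
  set K := RZ m ∩ {y | ∀ j, cayley A ≤ v j * y j}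
  set W := openStar v ∩ starChart v ⁻¹' Metric.ball 0 R
  have hKstar : K ⊆ openStar v := fun y hy j =>
    (neg_one_lt_cayley (div_nonneg (by positivity) (sin_two_pi_div_pos hm).le)).trans_le (hy.2 j)
  have hK : IsCompact K := by
    refine isCompact_RZ.inter_right ?_
    simp only [Set.ofPred_forall]
    exact isClosed_iInter fun j =>
      isClosed_le continuous_const (continuous_const.mul (continuous_apply j))
  have hW : IsOpen W :=
    (continuousOn_starChart v).isOpen_inter_preimage (isOpen_openStar v) Metric.isOpen_ball
  have hWK : RZ m ∩ W ⊆ K := fun y ⟨hy, hyv, hyR⟩ =>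
    ⟨hy, fun j =>
      (cayley_lt_mul_of_norm_starChart_lt hm hv hy hyv (mem_ball_zero_iff.1 hyR) j).le⟩
  obtain ⟨e⟩ := nonempty_homeomorph_image_of_injOn hK ((continuousOn_starChart v).mono hKstar)
    ((injOn_fanMap hm).comp ((injOn_fanCoord hv).mono hKstar) fun y hy =>
      fanCoord_mem_fanCone hv hy.1 (hKstar hy)) hWK
  refine ⟨_, _, hW.preimage continuous_subtype_val, Metric.isOpen_ball, ⟨hxv, ?_⟩,
    ⟨e.trans (Homeomorph.setCongr (starChart_image hm hv R))⟩⟩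
  simp [R]

/-- `RZ m` (with the subspace topology) is a topological 2-manifold: every point
has an open neighborhood homeomorphic to an open subset of `ℝ²`. -/
theorem RZ_is_two_manifold (m : ℕ) (hm : 3 ≤ m) (x : Fin m → ℝ) (hx : x ∈ RZ m) :
    ∃ (U : Set (RZ m)) (V : Set (Fin 2 → ℝ)),
      IsOpen U ∧ IsOpen V ∧ (⟨x, hx⟩ : RZ m) ∈ U ∧ Nonempty (U ≃ₜ V) := by
  have : NeZero m := ⟨by omega⟩
  obtain ⟨U, V, hU, hV, hxU, ⟨e⟩⟩ := exists_isOpen_homeomorph_complex hm hx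
  let φ : ℂ ≃ₜ (Fin 2 → ℝ) :=
    Complex.basisOneI.equivFun.toContinuousLinearEquiv.toHomeomorph
  exact ⟨U, φ '' V, hU, φ.isOpenMap V hV, hxU, ⟨e.trans (φ.image V)⟩⟩
end

section
/- The set RZ_3, with the subspace topology from ℝ^3, is homeomorphic to the 2-sphere, i.e., to the unit sphere {x ∈ EuclideanSpace ℝ (Fin 3) : ‖x‖ = 1}. -/
/-!
For `m = 3` every face of `RZ 3` has one coordinate fixed at `±1` and the other two free in
`[-1, 1]`, so `RZ 3` is the boundary of the cube `[-1, 1]³`, i.e. the unit sphere of the sup norm.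
Radial projection `x ↦ x / ‖x‖` identifies the unit spheres of any two norms related by a
continuous linear equivalence, in particular the sup-norm and Euclidean unit spheres of `ℝ³`.
-/

open Metric

lemma pi_norm_eq_iff {ι E : Type*} [Fintype ι] [Nonempty ι] [SeminormedAddGroup E] {f : ι → E}
    {r : ℝ} : ‖f‖ = r ↔ (∀ i, ‖f i‖ ≤ r) ∧ ∃ i, ‖f i‖ = r := by
  rw [and_comm, ← Set.mem_range, ← Set.forall_mem_range (p := (· ≤ r)), ← mem_upperBounds]
  exact ⟨(· ▸ IsGreatest.pi_norm f), (IsGreatest.pi_norm f).unique⟩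

lemma mem_RZ_three_iff {x : Fin 3 → ℝ} :
    x ∈ RZ 3 ↔ (∀ j, |x j| ≤ 1) ∧ ∃ k, |x k| = 1 := by
  simp only [RZ, Set.mem_iUnion, Set.mem_ofPred_eq, abs_le, abs_eq zero_le_one, or_comm]
  constructor
  · rintro ⟨i, hcube, hfixed⟩
    exact ⟨hcube, i + 2, hfixed _ (by fin_cases i <;> decide) (by fin_cases i <;> decide)⟩
  · rintro ⟨hcube, k, hk⟩
    -- in `Fin 3`, the only index outside the face `{k + 1, k + 2}` is `k`
    exact ⟨k + 1, hcube, fun j hj₁ hj₂ ↦ (show j = k by omega) ▸ hk⟩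

lemma RZ_three_eq_sphere : RZ 3 = sphere (0 : Fin 3 → ℝ) 1 := by
  ext x
  simp [mem_RZ_three_iff, pi_norm_eq_iff, Real.norm_eq_abs]

namespace ContinuousLinearEquiv

variable {E F : Type*} [NormedAddCommGroup E] [NormedSpace ℝ E] [NormedAddCommGroup F]
  [NormedSpace ℝ F]

lemma apply_ne_zero_of_mem_sphere (L : E ≃L[ℝ] F) (x : sphere (0 : E) 1) : L x ≠ 0 :=
  L.map_ne_zero_iff.mpr (ne_zero_of_mem_unit_sphere x)

noncomputable def radialMap (L : E ≃L[ℝ] F) (x : sphere (0 : E) 1) : sphere (0 : F) 1 :=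
  ⟨‖L x‖⁻¹ • L x, by
    rw [mem_sphere_zero_iff_norm]; exact norm_smul_inv_norm (L.apply_ne_zero_of_mem_sphere x)⟩

lemma continuous_radialMap (L : E ≃L[ℝ] F) : Continuous L.radialMap := by
  unfold radialMap
  fun_prop (disch := exact fun x ↦ norm_ne_zero_iff.mpr (L.apply_ne_zero_of_mem_sphere x))

lemma radialMap_symm_radialMap (L : E ≃L[ℝ] F) (x : sphere (0 : E) 1) :
    L.symm.radialMap (L.radialMap x) = x := by
  have hc : 0 < ‖L x‖ := norm_pos_iff.mpr (L.apply_ne_zero_of_mem_sphere x)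
  ext1
  simp [radialMap, norm_smul, smul_smul, hc.ne']

noncomputable def unitSphereHomeomorph (L : E ≃L[ℝ] F) : sphere (0 : E) 1 ≃ₜ sphere (0 : F) 1 where
  toFun := L.radialMap
  invFun := L.symm.radialMap
  left_inv := L.radialMap_symm_radialMap
  right_inv := L.symm.radialMap_symm_radialMap
  continuous_toFun := L.continuous_radialMap
  continuous_invFun := L.symm.continuous_radialMap

end ContinuousLinearEquiv

/-- `RZ 3` is homeomorphic to the 2-sphere. -/
theorem RZ_three_homeomorph_sphere :
    Nonempty ((RZ 3) ≃ₜ {x : EuclideanSpace ℝ (Fin 3) | ‖x‖ = 1}) := by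
  have hsphere : sphere (0 : EuclideanSpace ℝ (Fin 3)) 1 = {x | ‖x‖ = 1} :=
    Set.ext fun _ ↦ mem_sphere_zero_iff_norm
  exact ⟨((Homeomorph.setCongr RZ_three_eq_sphere).trans
    (EuclideanSpace.equiv (Fin 3) ℝ).symm.unitSphereHomeomorph).trans
    (Homeomorph.setCongr hsphere)⟩
end
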